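/- arXiv:1412.8025 — 2 statements merged into one kernel-verified Lean document; each statement's English description precedes it below -/
import Mathlib

section
/- Let Ω be a normal subgroup of finite index n in a group Γ, π: Ω → O(H) an orthogonal representation, and q: Ω → H a quasi-cocycle with defect D(q). With the notation f_γ(λ̂) = t_λ̂ γ t_{λ̂γ}⁻¹ ∈ Ω and the induced representation π̃: Γ → O(⊕_{Γ/Ω} H), the map q̃: Γ → ⊕_{Γ/Ω} H defined by q̃(γ) = ⊕_λ̂ q(f_γ(λ̂)) is a quasi-cocycle for π̃ with defect D(q̃) ≤ n^{1/2} · D(q). Moreover, if the representatives are chosen with t_ê = e, then ‖q̃(γ)‖ ≥ ‖q(γ)‖ for every γ ∈ Ω; in particular, if q is unbounded on Ω then q̃ is unbounded on Γ. -/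
/-!
Write `f_γ(x) = t_x γ t_{xγ}⁻¹`. These factors satisfy the cocycle rule
`f_{gh}(x) = f_g(x) f_h(xg)`, so the `x`-coordinate of the defect of `q̃` at `(g, h)` is the
defect of `q` at `(f_g(x), f_h(xg))`; summing the squares of `n` coordinates bounded by `D`
gives the factor `√n`. For `ω ∈ Ω` and `t_ê = e` one has `f_ω(ê) = ω`, so `q(ω)` is a
coordinate of `q̃(ω)`.
-/

theorem PiLp.norm_le_sqrt_card_mul {ι E : Type*} [Fintype ι] [SeminormedAddCommGroup E]
    {v : PiLp 2 (fun _ : ι => E)} {C : ℝ} (hv : ∀ i, ‖v i‖ ≤ C) :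
    ‖v‖ ≤ √(Fintype.card ι) * C := by
  rcases isEmpty_or_nonempty ι with hι | ⟨⟨i⟩⟩
  · simp [Subsingleton.elim v 0]
  have hC : 0 ≤ C := (norm_nonneg _).trans (hv i)
  calc ‖v‖ = √(∑ i, ‖v i‖ ^ 2) := PiLp.norm_eq_of_L2 v
    _ ≤ √(∑ _i : ι, C ^ 2) :=
        Real.sqrt_le_sqrt <| Finset.sum_le_sum fun i _ =>
          pow_le_pow_left₀ (norm_nonneg _) (hv i) 2
    _ = √(Fintype.card ι) * C := by
        rw [Finset.sum_const, Finset.card_univ, nsmul_eq_mul, Real.sqrt_mul (by positivity),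
          Real.sqrt_sq hC]

namespace QuotientGroup

variable {G : Type*} [Group G] {Ω : Subgroup G} [Ω.Normal] {t : G ⧸ Ω → G}

def inducedFactor (hf : ∀ (γ : G) (x : G ⧸ Ω), t x * γ * (t (x * γ))⁻¹ ∈ Ω)
    (γ : G) (x : G ⧸ Ω) : Ω :=
  ⟨t x * γ * (t (x * γ))⁻¹, hf γ x⟩

variable (hf : ∀ (γ : G) (x : G ⧸ Ω), t x * γ * (t (x * γ))⁻¹ ∈ Ω)

theorem inducedFactor_mul (g h : G) (x : G ⧸ Ω) :
    inducedFactor hf (g * h) x = inducedFactor hf g x * inducedFactor hf h (x * g) := by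
  ext
  simp [inducedFactor, mul_assoc]

theorem inducedFactor_coe_one (ht1 : t 1 = 1) (ω : Ω) : inducedFactor hf ω 1 = ω := by
  have hω : ((ω : G) : G ⧸ Ω) = 1 := (eq_one_iff _).mpr ω.2
  ext
  simp [inducedFactor, hω, ht1]

end QuotientGroup

theorem induced_quasicocycle_general
    {G : Type} [Group G] (Ω : Subgroup G) [Ω.Normal] [Fintype (G ⧸ Ω)]
    {H : Type} [NormedAddCommGroup H] [InnerProductSpace ℝ H]
    (π : Ω →* (H ≃ₗᵢ[ℝ] H))
    (t : G ⧸ Ω → G)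
    (ht1 : t 1 = 1)
    (hf : ∀ (γ : G) (x : G ⧸ Ω),
      t x * γ * (t (x * QuotientGroup.mk γ))⁻¹ ∈ Ω)
    (q : Ω → H) (D : ℝ)
    (hD : ∀ a b : Ω, ‖q (a * b) - q a - π a (q b)‖ ≤ D)
    (Pind : G →*
      (PiLp 2 (fun _ : G ⧸ Ω => H) ≃ₗᵢ[ℝ] PiLp 2 (fun _ : G ⧸ Ω => H)))
    (hPind : ∀ (γ : G) (ξ : PiLp 2 (fun _ : G ⧸ Ω => H)) (x : G ⧸ Ω),
      (WithLp.equiv 2 _) ((Pind γ) ξ) x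
        = π ⟨t x * γ * (t (x * QuotientGroup.mk γ))⁻¹, hf γ x⟩
            ((WithLp.equiv 2 _) ξ (x * QuotientGroup.mk γ))) :
    let qt : G → PiLp 2 (fun _ : G ⧸ Ω => H) := fun γ =>
      (WithLp.equiv 2 _).symm
        (fun x : G ⧸ Ω => q ⟨t x * γ * (t (x * QuotientGroup.mk γ))⁻¹, hf γ x⟩)
    (∀ g h : G,
      ‖qt (g * h) - qt g - Pind g (qt h)‖ ≤ Real.sqrt (Fintype.card (G ⧸ Ω)) * D) ∧
    (∀ ω : Ω, ‖q ω‖ ≤ ‖qt (ω : G)‖) ∧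
    ((¬ BddAbove (Set.range fun ω : Ω => ‖q ω‖)) →
      ¬ BddAbove (Set.range fun g : G => ‖qt g‖)) := by
  intro qt
  have hqt (γ : G) (x : G ⧸ Ω) : qt γ x = q (QuotientGroup.inducedFactor hf γ x) := rfl
  have hdefect (g h : G) (x : G ⧸ Ω) : ‖(qt (g * h) - qt g - Pind g (qt h)) x‖ ≤ D := by
    have hPind_qt : Pind g (qt h) x = π (QuotientGroup.inducedFactor hf g x) (qt h (x * g)) :=
      hPind g (qt h) x
    rw [PiLp.sub_apply, PiLp.sub_apply, hPind_qt, hqt, hqt, hqt,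
      QuotientGroup.inducedFactor_mul]
    exact hD _ _
  have hlower (ω : Ω) : ‖q ω‖ ≤ ‖qt ω‖ := by
    simpa only [hqt, QuotientGroup.inducedFactor_coe_one hf ht1] using
      PiLp.norm_apply_le (qt ω) 1
  exact ⟨fun g h => PiLp.norm_le_sqrt_card_mul (hdefect g h), hlower,
    fun hq hbdd => hq ((hbdd.range_comp_right Subtype.val).range_mono _ hlower)⟩

/-- The induced quasi-cocycle: if `q` is a quasi-cocycle of defect `D` for an
orthogonal representation `π` of a finite-index normal subgroup `Ω ⊴ Γ`, then
`q̃(γ) = ⊕_λ̂ q(f_γ(λ̂))` is a quasi-cocycle for the induced representation with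
defect at most `√[Γ:Ω] · D`; with representatives chosen so `t_ê = e`, one has
`‖q̃(γ)‖ ≥ ‖q(γ)‖` for `γ ∈ Ω`, so `q̃` is unbounded whenever `q` is. -/
theorem induced_quasicocycle
    {G : Type} [Group G] (Ω : Subgroup G) [Ω.Normal] [Fintype (G ⧸ Ω)]
    {H : Type} [NormedAddCommGroup H] [InnerProductSpace ℝ H]
    (π : Ω →* (H ≃ₗᵢ[ℝ] H))
    (t : G ⧸ Ω → G) (ht : ∀ x : G ⧸ Ω, (QuotientGroup.mk (t x) : G ⧸ Ω) = x)
    (ht1 : t 1 = 1)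
    (hf : ∀ (γ : G) (x : G ⧸ Ω),
      t x * γ * (t (x * QuotientGroup.mk γ))⁻¹ ∈ Ω)
    (q : Ω → H) (D : ℝ)
    (hD : ∀ a b : Ω, ‖q (a * b) - q a - π a (q b)‖ ≤ D)
    (Pind : G →*
      (PiLp 2 (fun _ : G ⧸ Ω => H) ≃ₗᵢ[ℝ] PiLp 2 (fun _ : G ⧸ Ω => H)))
    (hPind : ∀ (γ : G) (ξ : PiLp 2 (fun _ : G ⧸ Ω => H)) (x : G ⧸ Ω),
      (WithLp.equiv 2 _) ((Pind γ) ξ) x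
        = π ⟨t x * γ * (t (x * QuotientGroup.mk γ))⁻¹, hf γ x⟩
            ((WithLp.equiv 2 _) ξ (x * QuotientGroup.mk γ))) :
    let qt : G → PiLp 2 (fun _ : G ⧸ Ω => H) := fun γ =>
      (WithLp.equiv 2 _).symm
        (fun x : G ⧸ Ω => q ⟨t x * γ * (t (x * QuotientGroup.mk γ))⁻¹, hf γ x⟩)
    (∀ g h : G,
      ‖qt (g * h) - qt g - Pind g (qt h)‖ ≤ Real.sqrt (Fintype.card (G ⧸ Ω)) * D) ∧
    (∀ ω : Ω, ‖q ω‖ ≤ ‖qt (ω : G)‖) ∧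
    ((¬ BddAbove (Set.range fun ω : Ω => ‖q ω‖)) →
      ¬ BddAbove (Set.range fun g : G => ‖qt g‖)) :=
  induced_quasicocycle_general Ω π t ht1 hf q D hD Pind hPind
end

section
/- Let Γ be a group that has only finitely many finite conjugacy classes. Let F be the union of all finite conjugacy classes of Γ (the FC-center). Then F is a finite normal subgroup of Γ, and the quotient Γ_0 = Γ/F is an ICC group (every nontrivial conjugacy class of Γ_0 is infinite). In particular there is a short exact sequence 1 → F → Γ → Γ_0 → 1 with F finite and Γ_0 ICC. -/
/-- A group is ICC if every nontrivial conjugacy class is infinite. -/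
def IsICC (G : Type*) [Group G] : Prop :=
  ∀ g : G, g ≠ 1 → {h : G | IsConj g h}.Infinite

/-! The FC-center is a subgroup because the conjugacy class of `a * b` (resp. `a⁻¹`) is the image
of a subset of `conjugatesOf a ×ˢ conjugatesOf b` under multiplication (resp. of `conjugatesOf a`
under inversion). If only finitely many conjugacy classes are finite, it is a finite union of finite
sets. Finally, modulo a finite normal subgroup `N` every fibre of `G → G ⧸ N` is finite, so an
element whose image has a finite conjugacy class already has one in `G`; hence `G ⧸ FC(G)` is
ICC. -/

theorem conjugatesOf_one {G : Type*} [Monoid G] : conjugatesOf (1 : G) = {1} :=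
  Set.ext fun _ => isConj_one_right

section Group

variable {G : Type*} [Group G]

theorem conjugatesOf_mul_subset (a b : G) :
    conjugatesOf (a * b) ⊆ Set.image2 (· * ·) (conjugatesOf a) (conjugatesOf b) := by
  intro x hx
  obtain ⟨c, rfl⟩ := isConj_iff.1 hx
  exact ⟨_, isConj_iff.2 ⟨c, rfl⟩, _, isConj_iff.2 ⟨c, rfl⟩, by group⟩

theorem conjugatesOf_inv_subset (a : G) : conjugatesOf a⁻¹ ⊆ (conjugatesOf a)⁻¹ := by
  intro x hx
  obtain ⟨c, rfl⟩ := isConj_iff.1 hx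
  exact isConj_iff.2 ⟨c, by rw [conj_inv, inv_inv]⟩

variable (G) in
def fcCenter : Subgroup G where
  carrier := {g | (conjugatesOf g).Finite}
  one_mem' := by
    simp only [Set.mem_ofPred_eq, conjugatesOf_one, Set.finite_singleton]
  mul_mem' {a b} ha hb := (ha.image2 _ hb).subset (conjugatesOf_mul_subset a b)
  inv_mem' {a} ha := (Set.finite_inv.2 ha).subset (conjugatesOf_inv_subset a)

theorem mem_fcCenter {g : G} : g ∈ fcCenter G ↔ (conjugatesOf g).Finite := Iff.rfl

instance fcCenter.normal : (fcCenter G).Normal where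
  conj_mem g hg h := by
    rwa [mem_fcCenter, ← (isConj_iff.2 ⟨h, rfl⟩ : IsConj g (h * g * h⁻¹)).conjugatesOf_eq]

theorem fcCenter_finite
    (hfin : {S : Set G | (∃ g : G, S = conjugatesOf g) ∧ S.Finite}.Finite) :
    (fcCenter G : Set G).Finite :=
  (hfin.sUnion fun _ hS => hS.2).subset fun g hg => ⟨_, ⟨⟨g, rfl⟩, hg⟩, mem_conjugatesOf_self⟩

theorem QuotientGroup.finite_preimage_mk {N : Subgroup G} [Finite N] {t : Set (G ⧸ N)}
    (ht : t.Finite) : (((↑) : G → G ⧸ N) ⁻¹' t).Finite :=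
  have := ht.to_subtype
  Set.finite_coe_iff.1 (Finite.of_equiv _ (QuotientGroup.preimageMkEquivSubgroupProdSet N t).symm)

theorem finite_conjugatesOf_of_finite_conjugatesOf_mk {N : Subgroup G} [N.Normal] [Finite N]
    {g : G} (h : (conjugatesOf (g : G ⧸ N)).Finite) : (conjugatesOf g).Finite :=
  (QuotientGroup.finite_preimage_mk h).subset fun _ hx => (QuotientGroup.mk' N).map_isConj hx

theorem isICC_quotient_fcCenter [Finite (fcCenter G)] : IsICC (G ⧸ fcCenter G) := by
  rintro x hx hfin
  obtain ⟨g, rfl⟩ := QuotientGroup.mk_surjective x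
  exact hx ((QuotientGroup.eq_one_iff g).2 (finite_conjugatesOf_of_finite_conjugatesOf_mk hfin))

end Group

/-- If a group `Γ` has only finitely many finite conjugacy classes, then its
FC-center `F` (the union of all finite conjugacy classes) is a finite normal
subgroup and `Γ/F` is ICC; in particular there is a short exact sequence
`1 → F → Γ → Γ₀ → 1` with `F` finite and `Γ₀` ICC. -/
theorem fc_center_finite_and_quotient_icc
    {G : Type} [Group G]
    (hfin : {S : Set G | (∃ g : G, S = {h : G | IsConj g h}) ∧ S.Finite}.Finite) :
    ∃ (F : Subgroup G) (hn : F.Normal),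
      ((F : Set G) = {g : G | {h : G | IsConj g h}.Finite}) ∧
      Finite F ∧
      @IsICC (G ⧸ F) (@QuotientGroup.Quotient.group G _ F hn) := by
  have : Finite (fcCenter G) := (fcCenter_finite hfin).to_subtype
  exact ⟨fcCenter G, inferInstance, rfl, this, isICC_quotient_fcCenter⟩
end
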